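/- arXiv:2207.05837 — 8 statements merged into one kernel-verified Lean document; each statement's English description precedes it below -/
import Mathlib

section
/- Generalized performance difference lemma: For a discounted MDP with discount γ ∈ [0,1), bounded reward r, any two policies π, π', any bounded function f : S×A → R, and any initial state distribution μ, we have V^π_μ − E_{s∼μ}[f(s,π')] = (1/(1−γ)) E_{(s,a)∼d^π_μ}[T^{π'}f(s,a) − f(s,π')], where T^{π'}f(s,a) = r(s,a) + γ E_{s'∼P(s,a)}[f(s',π')], f(s,π') = E_{a∼π'(s)}[f(s,a)], V^π_μ is the expected discounted return of π from μ, and d^π_μ(s,a) = (1−γ)∑_{h≥0} γ^h d^π_h(s,a) is the discounted occupancy measure. -/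
/-!
Write `G h` for the expectation of `f(s, π')` under `d^π_h`. Averaging `T^{π'} f - f(·, π')` over
`d^π_h` gives `R h + γ G (h + 1) - G h`, where `R h` is the expected reward at step `h`, because
`d^π_{h+1}` is `d^π_h` pushed through `P` and `π`. Weighting by `γ^h` and summing, the `G`-terms
telescope to `-G 0 = -E_{s∼μ}[f(s, π')]` and the `R`-terms give `V^π_μ`. All series converge because
`P` and `π` are stochastic, so the `ℓ¹` norm of `d^π_h` never increases.
-/

open Finset

lemma summable_geometric_mul_of_abs_le {γ D : ℝ} (hγ0 : 0 ≤ γ) (hγ1 : γ < 1) {x : ℕ → ℝ}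
    (hx : ∀ n, |x n| ≤ D) : Summable fun n => γ ^ n * x n :=
  Summable.of_norm_bounded ((summable_geometric_of_lt_one hγ0 hγ1).mul_right D) fun n => by
    rw [Real.norm_eq_abs, abs_mul, abs_of_nonneg (pow_nonneg hγ0 n)]
    exact mul_le_mul_of_nonneg_left (hx n) (pow_nonneg hγ0 n)

lemma hasSum_geometric_telescope {γ : ℝ} {G : ℕ → ℝ} (hG : Summable fun n => γ ^ n * G n) :
    HasSum (fun n => γ ^ n * (γ * G (n + 1) - G n)) (-G 0) := by
  obtain ⟨T, hT⟩ := hG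
  have hshift : HasSum (fun n => γ ^ (n + 1) * G (n + 1)) (T - G 0) := by
    simpa using (hasSum_nat_add_iff' 1).2 hT
  simpa only [sub_sub_cancel_left, mul_sub, ← mul_assoc, ← pow_succ] using hshift.sub hT

lemma hasSum_mul_sum_sum {ι κ : Type*} [Fintype ι] [Fintype κ] {c : ℕ → ℝ}
    {d : ℕ → ι → κ → ℝ} (hd : ∀ i j, Summable fun n => c n * d n i j) (q : ι → κ → ℝ) :
    HasSum (fun n => c n * ∑ i, ∑ j, d n i j * q i j)
      (∑ i, ∑ j, (∑' n, c n * d n i j) * q i j) := by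
  simp_rw [mul_sum, ← mul_assoc]
  exact hasSum_sum fun i _ => hasSum_sum fun j _ => (hd i j).hasSum.mul_right (q i j)

section StateActionDistribution

variable {S A : Type*} [Fintype S] [Fintype A] {P : S → A → S → ℝ} {π : S → A → ℝ}
  {dh : ℕ → S → A → ℝ}

lemma sum_sum_policy_mul (hπ1 : ∀ s, ∑ a, π s a = 1) (ν g : S → ℝ) :
    ∑ s, ∑ a, ν s * π s a * g s = ∑ s, ν s * g s := by
  refine sum_congr rfl fun s _ => ?_
  rw [← sum_mul, ← mul_sum, hπ1, mul_one]

lemma sum_sum_succ_mul (hπ1 : ∀ s, ∑ a, π s a = 1)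
    (hdhsucc : ∀ h s a, dh (h + 1) s a = (∑ s', ∑ a', dh h s' a' * P s' a' s) * π s a)
    (h : ℕ) (g : S → ℝ) :
    ∑ s, ∑ a, dh (h + 1) s a * g s = ∑ s, ∑ a, dh h s a * ∑ s', P s a s' * g s' := by
  simp_rw [hdhsucc, sum_sum_policy_mul hπ1, sum_mul, mul_sum, mul_assoc]
  rw [sum_comm]
  exact sum_congr rfl fun _ _ => sum_comm

lemma sum_sum_abs_succ_le (hP0 : ∀ s a s', 0 ≤ P s a s') (hP1 : ∀ s a, ∑ s', P s a s' = 1)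
    (hπ0 : ∀ s a, 0 ≤ π s a) (hπ1 : ∀ s, ∑ a, π s a = 1)
    (hdhsucc : ∀ h s a, dh (h + 1) s a = (∑ s', ∑ a', dh h s' a' * P s' a' s) * π s a)
    (h : ℕ) : ∑ s, ∑ a, |dh (h + 1) s a| ≤ ∑ s, ∑ a, |dh h s a| :=
  calc ∑ s, ∑ a, |dh (h + 1) s a| = ∑ s, |∑ s', ∑ a', dh h s' a' * P s' a' s| := by
        simp_rw [hdhsucc, abs_mul, abs_of_nonneg (hπ0 _ _), ← mul_sum, hπ1, mul_one]
    _ ≤ ∑ s, ∑ s', ∑ a', |dh h s' a'| * P s' a' s := by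
        refine sum_le_sum fun s _ => (abs_sum_le_sum_abs _ _).trans (sum_le_sum fun s' _ => ?_)
        refine (abs_sum_le_sum_abs _ _).trans_eq (sum_congr rfl fun a' _ => ?_)
        rw [abs_mul, abs_of_nonneg (hP0 _ _ _)]
    _ = ∑ s', ∑ a', |dh h s' a'| * ∑ s, P s' a' s := by
        simp_rw [mul_sum]
        rw [sum_comm]
        exact sum_congr rfl fun _ _ => sum_comm
    _ = ∑ s, ∑ a, |dh h s a| := by simp_rw [hP1, mul_one]

lemma abs_le_sum_sum_abs_zero (hP0 : ∀ s a s', 0 ≤ P s a s') (hP1 : ∀ s a, ∑ s', P s a s' = 1)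
    (hπ0 : ∀ s a, 0 ≤ π s a) (hπ1 : ∀ s, ∑ a, π s a = 1)
    (hdhsucc : ∀ h s a, dh (h + 1) s a = (∑ s', ∑ a', dh h s' a' * P s' a' s) * π s a)
    (h : ℕ) (s : S) (a : A) : |dh h s a| ≤ ∑ s, ∑ a, |dh 0 s a| :=
  calc |dh h s a| ≤ ∑ a', |dh h s a'| :=
        single_le_sum (fun a' _ => abs_nonneg (dh h s a')) (mem_univ a)
    _ ≤ ∑ s', ∑ a', |dh h s' a'| :=
        single_le_sum (fun s' _ => sum_nonneg fun a' _ => abs_nonneg (dh h s' a')) (mem_univ s)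
    _ ≤ ∑ s, ∑ a, |dh 0 s a| :=
        antitone_nat_of_succ_le (f := fun h => ∑ s, ∑ a, |dh h s a|) (sum_sum_abs_succ_le hP0 hP1 hπ0 hπ1 hdhsucc) (Nat.zero_le h)

end StateActionDistribution

theorem generalized_performance_difference_general
    (S A : Type) [Fintype S] [Fintype A]
    (P : S → A → S → ℝ) (r : S → A → ℝ) (γ : ℝ)
    (π π' : S → A → ℝ) (μ : S → ℝ) (f : S → A → ℝ)
    (hγ0 : 0 ≤ γ) (hγ1 : γ < 1)
    (hP0 : ∀ s a s', 0 ≤ P s a s') (hP1 : ∀ s a, ∑ s', P s a s' = 1)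
    (hπ0 : ∀ s a, 0 ≤ π s a) (hπ1 : ∀ s, ∑ a, π s a = 1)
    -- step-h state-action distribution of π starting from μ
    (dh : ℕ → S → A → ℝ)
    (hdh0 : ∀ s a, dh 0 s a = μ s * π s a)
    (hdhsucc : ∀ h s a,
      dh (h + 1) s a = (∑ s', ∑ a', dh h s' a' * P s' a' s) * π s a)
    -- expected discounted return of π from μ
    (V : ℝ) (hV : V = ∑' h : ℕ, γ ^ h * ∑ s, ∑ a, dh h s a * r s a)
    -- discounted state-action occupancy measure
    (docc : S → A → ℝ)
    (hdocc : ∀ s a, docc s a = (1 - γ) * ∑' h : ℕ, γ ^ h * dh h s a)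
    -- Bellman operator of π' applied to f
    (Tf : S → A → ℝ)
    (hT : ∀ s a, Tf s a
      = r s a + γ * ∑ s', P s a s' * ∑ a', π' s' a' * f s' a')
    -- f(s, π')
    (fπ' : S → ℝ) (hfπ' : ∀ s, fπ' s = ∑ a, π' s a * f s a) :
    V - ∑ s, μ s * fπ' s
      = (1 / (1 - γ)) * ∑ s, ∑ a, docc s a * (Tf s a - fπ' s) := by
  have hsum (s : S) (a : A) : Summable fun h => γ ^ h * dh h s a :=
    summable_geometric_mul_of_abs_le hγ0 hγ1
      fun h => abs_le_sum_sum_abs_zero hP0 hP1 hπ0 hπ1 hdhsucc h s a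
  set G : ℕ → ℝ := fun h => ∑ s, ∑ a, dh h s a * fπ' s
  have hG0 : G 0 = ∑ s, μ s * fπ' s := by
    simp_rw [G, hdh0, sum_sum_policy_mul hπ1]
  have hstep (h : ℕ) : ∑ s, ∑ a, dh h s a * (Tf s a - fπ' s)
      = ∑ s, ∑ a, dh h s a * r s a + (γ * G (h + 1) - G h) := by
    simp_rw [G, sum_sum_succ_mul hπ1 hdhsucc, hT, ← hfπ']
    simp only [mul_sub, mul_add, sum_add_distrib, sum_sub_distrib, mul_left_comm (dh _ _ _) γ,
      ← mul_sum]
    ring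
  have htotal : HasSum (fun h => γ ^ h * ∑ s, ∑ a, dh h s a * (Tf s a - fπ' s)) (V - G 0) := by
    have hsplit := (hasSum_mul_sum_sum hsum r).summable.hasSum.add
      (hasSum_geometric_telescope (G := G) (hasSum_mul_sum_sum hsum fun s _ => fπ' s).summable)
    rw [← hV, ← sub_eq_add_neg] at hsplit
    convert hsplit using 2 with h
    rw [hstep, mul_add]
  have hocc : (1 / (1 - γ)) * ∑ s, ∑ a, docc s a * (Tf s a - fπ' s)
      = ∑ s, ∑ a, (∑' h, γ ^ h * dh h s a) * (Tf s a - fπ' s) := by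
    have hγne : 1 - γ ≠ 0 := by linarith
    simp_rw [hdocc, mul_sum]
    field_simp
  rw [hocc, ← hG0]
  exact ((hasSum_mul_sum_sum hsum _).unique htotal).symm

theorem generalized_performance_difference
    (S A : Type) [Fintype S] [Fintype A]
    (P : S → A → S → ℝ) (r : S → A → ℝ) (γ : ℝ)
    (π π' : S → A → ℝ) (μ : S → ℝ) (f : S → A → ℝ)
    (hγ0 : 0 ≤ γ) (hγ1 : γ < 1)
    (hP0 : ∀ s a s', 0 ≤ P s a s') (hP1 : ∀ s a, ∑ s', P s a s' = 1)
    (hr : ∀ s a, |r s a| ≤ 1)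
    (hπ0 : ∀ s a, 0 ≤ π s a) (hπ1 : ∀ s, ∑ a, π s a = 1)
    (hπ'0 : ∀ s a, 0 ≤ π' s a) (hπ'1 : ∀ s, ∑ a, π' s a = 1)
    (hμ0 : ∀ s, 0 ≤ μ s) (hμ1 : ∑ s, μ s = 1)
    (hfbdd : ∃ C : ℝ, ∀ s a, |f s a| ≤ C)
    -- step-h state-action distribution of π starting from μ
    (dh : ℕ → S → A → ℝ)
    (hdh0 : ∀ s a, dh 0 s a = μ s * π s a)
    (hdhsucc : ∀ h s a,
      dh (h + 1) s a = (∑ s', ∑ a', dh h s' a' * P s' a' s) * π s a)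
    -- expected discounted return of π from μ
    (V : ℝ) (hV : V = ∑' h : ℕ, γ ^ h * ∑ s, ∑ a, dh h s a * r s a)
    -- discounted state-action occupancy measure
    (docc : S → A → ℝ)
    (hdocc : ∀ s a, docc s a = (1 - γ) * ∑' h : ℕ, γ ^ h * dh h s a)
    -- Bellman operator of π' applied to f
    (Tf : S → A → ℝ)
    (hT : ∀ s a, Tf s a
      = r s a + γ * ∑ s', P s a s' * ∑ a', π' s' a' * f s' a')
    -- f(s, π')
    (fπ' : S → ℝ) (hfπ' : ∀ s, fπ' s = ∑ a, π' s a * f s a) :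
    V - ∑ s, μ s * fπ' s
      = (1 / (1 - γ)) * ∑ s, ∑ a, docc s a * (Tf s a - fπ' s) :=
  generalized_performance_difference_general S A P r γ π π' μ f hγ0 hγ1 hP0 hP1 hπ0 hπ1 dh hdh0
    hdhsucc V hV docc hdocc Tf hT fπ' hfπ'
end

section
/- Bellman error accumulation: Fix a policy π and an initial distribution p₀, let d = d^π_{p₀} be the discounted occupancy measure, and let ||g||_d denote the L²(d) norm. Suppose f₀ = 0 and f₁,…,f_K : S×A → [−1/(1−γ), 1/(1−γ)] satisfy ||f_k − T^π f_{k−1}||_d ≤ η for all k = 1,…,K, where T^π is the Bellman operator of π with rewards bounded by 1. Then for all k = 1,…,K, ||f_k − T^π f_k||_d ≤ 4η/(1−γ) + γ^{k/2}. -/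
open Finset

theorem bellman_error_accumulation
    (S A : Type) [Fintype S] [Fintype A]
    (P : S → A → S → ℝ) (r : S → A → ℝ) (γ : ℝ)
    (π : S → A → ℝ) (p0 : S → ℝ)
    (hγ0 : 0 < γ) (hγ1 : γ < 1)
    (hP0 : ∀ s a s', 0 ≤ P s a s') (hP1 : ∀ s a, ∑ s', P s a s' = 1)
    (hr : ∀ s a, |r s a| ≤ 1)
    (hπ0 : ∀ s a, 0 ≤ π s a) (hπ1 : ∀ s, ∑ a, π s a = 1)
    (hp00 : ∀ s, 0 ≤ p0 s) (hp01 : ∑ s, p0 s = 1)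
    -- step-h state-action distribution of π starting from p0
    (dh : ℕ → S → A → ℝ)
    (hdh0 : ∀ s a, dh 0 s a = p0 s * π s a)
    (hdhsucc : ∀ h s a,
      dh (h + 1) s a = (∑ s', ∑ a', dh h s' a' * P s' a' s) * π s a)
    -- discounted occupancy measure d = d^π_{p0}
    (docc : S → A → ℝ)
    (hdocc : ∀ s a, docc s a = (1 - γ) * ∑' h : ℕ, γ ^ h * dh h s a)
    -- Bellman operator of π
    (T : (S → A → ℝ) → S → A → ℝ)
    (hT : ∀ g s a, T g s a
      = r s a + γ * ∑ s', P s a s' * ∑ a', π s' a' * g s' a')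
    -- L²(d) norm
    (L2 : (S → A → ℝ) → ℝ)
    (hL2 : ∀ g, L2 g = Real.sqrt (∑ s, ∑ a, docc s a * g s a ^ 2))
    (K : ℕ) (f : ℕ → S → A → ℝ) (η : ℝ) (hη : 0 ≤ η)
    (hf0 : f 0 = fun _ _ => 0)
    (hfbdd : ∀ k, k ≤ K → ∀ s a, |f k s a| ≤ 1 / (1 - γ))
    (hreg : ∀ k, 1 ≤ k → k ≤ K →
      L2 (fun s a => f k s a - T (f (k - 1)) s a) ≤ η) :
    ∀ k, 1 ≤ k → k ≤ K →
      L2 (fun s a => f k s a - T (f k) s a)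
        ≤ 4 * η / (1 - γ) + γ ^ ((k : ℝ) / 2) := by
  have hγle : (0:ℝ) ≤ γ := hγ0.le
  have h1γ : (0:ℝ) < 1 - γ := by linarith
  -- basic facts about dh
  have hdh_nonneg : ∀ h s a, 0 ≤ dh h s a := by
    intro h
    induction h with
    | zero => intro s a; rw [hdh0]; exact mul_nonneg (hp00 s) (hπ0 s a)
    | succ h ih =>
      intro s a; rw [hdhsucc]
      exact mul_nonneg (Finset.sum_nonneg fun s' _ => Finset.sum_nonneg fun a' _ =>
        mul_nonneg (ih s' a') (hP0 s' a' s)) (hπ0 s a)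
  have hdh_sum : ∀ h, ∑ s, ∑ a, dh h s a = 1 := by
    intro h
    induction h with
    | zero =>
      simp only [hdh0, ← Finset.mul_sum, hπ1, mul_one]
      exact hp01
    | succ h ih =>
      calc ∑ s, ∑ a, dh (h+1) s a
          = ∑ s, (∑ s', ∑ a', dh h s' a' * P s' a' s) := by
            simp only [hdhsucc, ← Finset.mul_sum, hπ1, mul_one]
        _ = ∑ s', ∑ a', dh h s' a' * ∑ s, P s' a' s := by
            rw [Finset.sum_comm]
            refine Finset.sum_congr rfl fun s' _ => ?_
            rw [Finset.sum_comm]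
            exact Finset.sum_congr rfl fun a' _ => (Finset.mul_sum _ _ _).symm
        _ = 1 := by simp only [hP1, mul_one]; exact ih
  have hdh_le : ∀ h s a, dh h s a ≤ 1 := by
    intro h s a
    have h1 : dh h s a ≤ ∑ a', dh h s a' :=
      Finset.single_le_sum (fun a' _ => hdh_nonneg h s a') (Finset.mem_univ a)
    have h2 : ∑ a', dh h s a' ≤ ∑ s', ∑ a', dh h s' a' :=
      Finset.single_le_sum (fun s' _ => Finset.sum_nonneg fun a' _ => hdh_nonneg h s' a')
        (Finset.mem_univ s)
    rw [hdh_sum h] at h2; linarith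
  -- summability
  have hsumm : ∀ s a, Summable (fun h : ℕ => γ ^ h * dh h s a) := by
    intro s a
    refine Summable.of_nonneg_of_le
      (fun h => mul_nonneg (pow_nonneg hγle h) (hdh_nonneg h s a))
      (fun h => ?_) (summable_geometric_of_lt_one hγle hγ1)
    calc γ^h * dh h s a ≤ γ^h * 1 :=
          mul_le_mul_of_nonneg_left (hdh_le h s a) (pow_nonneg hγle h)
      _ = γ^h := mul_one _
  -- docc nonneg
  have hd0 : ∀ s a, 0 ≤ docc s a := by
    intro s a; rw [hdocc]
    exact mul_nonneg h1γ.le (tsum_nonneg fun h =>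
      mul_nonneg (pow_nonneg hγle h) (hdh_nonneg h s a))
  -- docc sums to one
  have hdsum : ∑ s, ∑ a, docc s a = 1 := by
    calc ∑ s, ∑ a, docc s a
        = (1-γ) * ∑ s, ∑ a, ∑' h:ℕ, γ^h * dh h s a := by
          simp only [hdocc, ← Finset.mul_sum]
      _ = (1-γ) * ∑' h:ℕ, ∑ s, ∑ a, γ^h * dh h s a := by
          congr 1
          rw [Summable.tsum_finsetSum (fun s _ => summable_sum (fun a _ => hsumm s a))]
          exact Finset.sum_congr rfl fun s _ => (Summable.tsum_finsetSum (fun a _ => hsumm s a)).symm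
      _ = (1-γ) * ∑' h:ℕ, γ^h := by
          congr 1
          refine tsum_congr fun h => ?_
          simp only [← Finset.mul_sum]
          rw [hdh_sum h, mul_one]
      _ = 1 := by
          rw [tsum_geometric_of_lt_one hγle hγ1]
          field_simp
  -- flow equation
  have hflow : ∀ s a, docc s a
      = γ * ((∑ s', ∑ a', docc s' a' * P s' a' s) * π s a) + (1-γ) * (p0 s * π s a) := by
    intro s a
    have hshift : (∑' h:ℕ, γ^h * dh h s a)
        = dh 0 s a + ∑' h:ℕ, γ^(h+1) * dh (h+1) s a := by
      rw [Summable.tsum_eq_zero_add (hsumm s a)]; simp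
    have step1 : ∀ h:ℕ, γ^(h+1) * dh (h+1) s a
        = (∑ s', ∑ a', (γ^h * dh h s' a') * P s' a' s) * (γ * π s a) := by
      intro h
      rw [hdhsucc]
      have e1 : ∑ s', ∑ a', (γ^h * dh h s' a') * P s' a' s
          = γ^h * ∑ s', ∑ a', dh h s' a' * P s' a' s := by
        simp only [Finset.mul_sum, mul_assoc]
      rw [e1]; ring
    have htail : ∑' h:ℕ, γ^(h+1) * dh (h+1) s a
        = (∑ s', ∑ a', (∑' h:ℕ, γ^h * dh h s' a') * P s' a' s) * (γ * π s a) := by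
      calc ∑' h:ℕ, γ^(h+1) * dh (h+1) s a
          = ∑' h:ℕ, (∑ s', ∑ a', (γ^h * dh h s' a') * P s' a' s) * (γ * π s a) :=
            tsum_congr fun h => step1 h
        _ = (∑' h:ℕ, ∑ s', ∑ a', (γ^h * dh h s' a') * P s' a' s) * (γ * π s a) :=
            tsum_mul_right
        _ = (∑ s', ∑ a', (∑' h:ℕ, γ^h * dh h s' a') * P s' a' s) * (γ * π s a) := by
            congr 1
            rw [Summable.tsum_finsetSum (fun s' _ => summable_sum (fun a' _ => (hsumm s' a').mul_right _))]
            refine Finset.sum_congr rfl fun s' _ => ?_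
            rw [Summable.tsum_finsetSum (fun a' _ => (hsumm s' a').mul_right _)]
            exact Finset.sum_congr rfl fun a' _ => tsum_mul_right
    rw [hdocc s a, hshift, htail, hdh0]
    simp only [hdocc]
    have e2 : ∑ s', ∑ a', ((1-γ) * ∑' h:ℕ, γ^h * dh h s' a') * P s' a' s
        = (1-γ) * ∑ s', ∑ a', (∑' h:ℕ, γ^h * dh h s' a') * P s' a' s := by
      simp only [Finset.mul_sum, mul_assoc]
    rw [e2]; ring
  -- key inequality from the flow equation
  have hkey : ∀ s a, γ * ((∑ s', ∑ a', docc s' a' * P s' a' s) * π s a) ≤ docc s a := by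
    intro s a
    have hfl := hflow s a
    have hnn : 0 ≤ (1-γ) * (p0 s * π s a) :=
      mul_nonneg h1γ.le (mul_nonneg (hp00 s) (hπ0 s a))
    linarith
  -- conversion of double sums to product sums
  have hconv : ∀ g : S → A → ℝ, ∑ s, ∑ a, docc s a * g s a ^ 2
      = ∑ p : S × A, docc p.1 p.2 * g p.1 p.2 ^ 2 :=
    fun g => (Fintype.sum_prod_type
      (f := fun p : S × A => docc p.1 p.2 * g p.1 p.2 ^ 2)).symm
  -- Cauchy-Schwarz in sqrt form
  have hCS : ∀ u v : S × A → ℝ, ∑ p : S × A, u p * v p ≤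
      Real.sqrt (∑ p : S × A, u p ^ 2) * Real.sqrt (∑ p : S × A, v p ^ 2) := by
    intro u v
    have h1 : (∑ p : S × A, u p * v p)^2
        ≤ (∑ p : S × A, u p^2) * (∑ p : S × A, v p^2) :=
      Finset.sum_mul_sq_le_sq_mul_sq _ _ _
    calc ∑ p : S × A, u p * v p ≤ |∑ p : S × A, u p * v p| := le_abs_self _
      _ = Real.sqrt ((∑ p : S × A, u p * v p)^2) := (Real.sqrt_sq_eq_abs _).symm
      _ ≤ Real.sqrt ((∑ p : S × A, u p^2) * (∑ p : S × A, v p^2)) := Real.sqrt_le_sqrt h1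
      _ = Real.sqrt (∑ p : S × A, u p^2) * Real.sqrt (∑ p : S × A, v p^2) :=
          Real.sqrt_mul (Finset.sum_nonneg fun p _ => sq_nonneg _) _
  -- triangle inequality (Minkowski)
  have htri : ∀ g₁ g₂ g₃ : S → A → ℝ, (∀ s a, g₁ s a = g₂ s a + g₃ s a) →
      L2 g₁ ≤ L2 g₂ + L2 g₃ := by
    intro g₁ g₂ g₃ hg
    simp only [hL2]
    rw [hconv g₁, hconv g₂, hconv g₃]
    set N₂ := ∑ p : S × A, docc p.1 p.2 * g₂ p.1 p.2 ^ 2 with hN₂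
    set N₃ := ∑ p : S × A, docc p.1 p.2 * g₃ p.1 p.2 ^ 2 with hN₃
    have hN₂0 : 0 ≤ N₂ := Finset.sum_nonneg fun p _ => mul_nonneg (hd0 _ _) (sq_nonneg _)
    have hN₃0 : 0 ≤ N₃ := Finset.sum_nonneg fun p _ => mul_nonneg (hd0 _ _) (sq_nonneg _)
    have hcross : ∑ p : S × A, docc p.1 p.2 * (g₂ p.1 p.2 * g₃ p.1 p.2)
        ≤ Real.sqrt N₂ * Real.sqrt N₃ := by
      have he : ∀ p : S × A, docc p.1 p.2 * (g₂ p.1 p.2 * g₃ p.1 p.2)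
          = (Real.sqrt (docc p.1 p.2) * g₂ p.1 p.2)
            * (Real.sqrt (docc p.1 p.2) * g₃ p.1 p.2) := by
        intro p
        linear_combination (-(g₂ p.1 p.2 * g₃ p.1 p.2)) * Real.mul_self_sqrt (hd0 p.1 p.2)
      rw [Finset.sum_congr rfl (fun p _ => he p)]
      have hu2 : ∑ p : S × A, (Real.sqrt (docc p.1 p.2) * g₂ p.1 p.2)^2 = N₂ := by
        refine Finset.sum_congr rfl fun p _ => ?_
        rw [mul_pow, Real.sq_sqrt (hd0 _ _)]
      have hv2 : ∑ p : S × A, (Real.sqrt (docc p.1 p.2) * g₃ p.1 p.2)^2 = N₃ := by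
        refine Finset.sum_congr rfl fun p _ => ?_
        rw [mul_pow, Real.sq_sqrt (hd0 _ _)]
      calc ∑ p : S × A, (Real.sqrt (docc p.1 p.2) * g₂ p.1 p.2)
              * (Real.sqrt (docc p.1 p.2) * g₃ p.1 p.2)
          ≤ Real.sqrt (∑ p : S × A, (Real.sqrt (docc p.1 p.2) * g₂ p.1 p.2)^2)
            * Real.sqrt (∑ p : S × A, (Real.sqrt (docc p.1 p.2) * g₃ p.1 p.2)^2) :=
            hCS _ _
        _ = Real.sqrt N₂ * Real.sqrt N₃ := by rw [hu2, hv2]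
    have hexp : ∑ p : S × A, docc p.1 p.2 * g₁ p.1 p.2 ^ 2
        = N₂ + 2 * ∑ p : S × A, docc p.1 p.2 * (g₂ p.1 p.2 * g₃ p.1 p.2) + N₃ := by
      rw [hN₂, hN₃, Finset.mul_sum, ← Finset.sum_add_distrib, ← Finset.sum_add_distrib]
      refine Finset.sum_congr rfl fun p _ => ?_
      rw [hg]; ring
    have hle : ∑ p : S × A, docc p.1 p.2 * g₁ p.1 p.2 ^ 2
        ≤ (Real.sqrt N₂ + Real.sqrt N₃)^2 := by
      rw [hexp]
      have hs2 : Real.sqrt N₂ ^ 2 = N₂ := Real.sq_sqrt hN₂0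
      have hs3 : Real.sqrt N₃ ^ 2 = N₃ := Real.sq_sqrt hN₃0
      nlinarith [hcross]
    calc Real.sqrt (∑ p : S × A, docc p.1 p.2 * g₁ p.1 p.2 ^ 2)
        ≤ Real.sqrt ((Real.sqrt N₂ + Real.sqrt N₃)^2) := Real.sqrt_le_sqrt hle
      _ = |Real.sqrt N₂ + Real.sqrt N₃| := Real.sqrt_sq_eq_abs _
      _ = Real.sqrt N₂ + Real.sqrt N₃ :=
          abs_of_nonneg (add_nonneg (Real.sqrt_nonneg _) (Real.sqrt_nonneg _))
  -- symmetry of the norm of a difference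
  have hsymm : ∀ g₁ g₂ : S → A → ℝ,
      L2 (fun s a => g₁ s a - g₂ s a) = L2 (fun s a => g₂ s a - g₁ s a) := by
    intro g₁ g₂
    rw [hL2, hL2]
    congr 1
    exact Finset.sum_congr rfl fun s _ => Finset.sum_congr rfl fun a _ => by ring
  -- nonnegativity of L2
  have hL2nn : ∀ g, 0 ≤ L2 g := fun g => by rw [hL2]; exact Real.sqrt_nonneg _
  -- Jensen pointwise
  have hjensen : ∀ (g : S → A → ℝ) (s : S) (a : A),
      (∑ s', P s a s' * ∑ a', π s' a' * g s' a')^2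
        ≤ ∑ q : S × A, (P s a q.1 * π q.1 q.2) * g q.1 q.2^2 := by
    intro g s a
    have hw : ∀ p : S × A, 0 ≤ P s a p.1 * π p.1 p.2 :=
      fun p => mul_nonneg (hP0 _ _ _) (hπ0 _ _)
    have hE : ∑ s', P s a s' * ∑ a', π s' a' * g s' a'
        = ∑ p : S × A, Real.sqrt (P s a p.1 * π p.1 p.2) *
            (Real.sqrt (P s a p.1 * π p.1 p.2) * g p.1 p.2) := by
      rw [Fintype.sum_prod_type (f := fun p : S × A =>
        Real.sqrt (P s a p.1 * π p.1 p.2) * (Real.sqrt (P s a p.1 * π p.1 p.2) * g p.1 p.2))]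
      refine Finset.sum_congr rfl fun s' _ => ?_
      rw [Finset.mul_sum]
      refine Finset.sum_congr rfl fun a' _ => ?_
      dsimp only
      linear_combination (-(g s' a')) *
        Real.mul_self_sqrt (mul_nonneg (hP0 s a s') (hπ0 s' a'))
    rw [hE]
    calc (∑ p : S × A, Real.sqrt (P s a p.1 * π p.1 p.2) *
            (Real.sqrt (P s a p.1 * π p.1 p.2) * g p.1 p.2))^2
        ≤ (∑ p : S × A, Real.sqrt (P s a p.1 * π p.1 p.2)^2) *
            ∑ p : S × A, (Real.sqrt (P s a p.1 * π p.1 p.2) * g p.1 p.2)^2 :=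
          Finset.sum_mul_sq_le_sq_mul_sq _ _ _
      _ = 1 * ∑ p : S × A, (P s a p.1 * π p.1 p.2) * g p.1 p.2^2 := by
          congr 1
          · calc ∑ p : S × A, Real.sqrt (P s a p.1 * π p.1 p.2)^2
                = ∑ p : S × A, P s a p.1 * π p.1 p.2 :=
                  Finset.sum_congr rfl fun p _ => Real.sq_sqrt (hw p)
              _ = 1 := by
                  rw [Fintype.sum_prod_type (f := fun p : S × A => P s a p.1 * π p.1 p.2)]
                  calc ∑ s', ∑ a', P s a s' * π s' a' = ∑ s', P s a s' := by
                        refine Finset.sum_congr rfl fun s' _ => ?_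
                        rw [← Finset.mul_sum, hπ1, mul_one]
                    _ = 1 := hP1 s a
          · refine Finset.sum_congr rfl fun p _ => ?_
            rw [mul_pow, Real.sq_sqrt (hw p)]
      _ = ∑ q : S × A, (P s a q.1 * π q.1 q.2) * g q.1 q.2^2 := one_mul _
  -- contraction of the Bellman operator
  have hcontr : ∀ g₁ g₂ : S → A → ℝ,
      L2 (fun s a => T g₁ s a - T g₂ s a)
        ≤ Real.sqrt γ * L2 (fun s a => g₁ s a - g₂ s a) := by
    intro g₁ g₂
    have hTdiff : ∀ s a, T g₁ s a - T g₂ s a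
        = γ * ∑ s', P s a s' * ∑ a', π s' a' * (g₁ s' a' - g₂ s' a') := by
      intro s a
      rw [hT, hT]
      have e : ∑ s', P s a s' * ∑ a', π s' a' * (g₁ s' a' - g₂ s' a')
          = (∑ s', P s a s' * ∑ a', π s' a' * g₁ s' a')
            - ∑ s', P s a s' * ∑ a', π s' a' * g₂ s' a' := by
        rw [← Finset.sum_sub_distrib]
        refine Finset.sum_congr rfl fun s' _ => ?_
        rw [← mul_sub, ← Finset.sum_sub_distrib]
        congr 1
        exact Finset.sum_congr rfl fun a' _ => by ring
      rw [e]; ring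
    -- pointwise bound
    have hb : ∀ s a, docc s a * (T g₁ s a - T g₂ s a)^2
        ≤ γ^2 * ∑ q : S × A, docc s a * ((P s a q.1 * π q.1 q.2) * (g₁ q.1 q.2 - g₂ q.1 q.2)^2) := by
      intro s a
      rw [hTdiff, mul_pow, ← Finset.mul_sum]
      calc docc s a * (γ^2 * (∑ s', P s a s' * ∑ a', π s' a' * (g₁ s' a' - g₂ s' a'))^2)
          ≤ docc s a * (γ^2 * ∑ q : S × A,
              (P s a q.1 * π q.1 q.2) * (g₁ q.1 q.2 - g₂ q.1 q.2)^2) :=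
            mul_le_mul_of_nonneg_left
              (mul_le_mul_of_nonneg_left (hjensen _ s a) (sq_nonneg γ)) (hd0 s a)
        _ = γ^2 * (docc s a * ∑ q : S × A,
              (P s a q.1 * π q.1 q.2) * (g₁ q.1 q.2 - g₂ q.1 q.2)^2) := by ring
    -- sum over all (s,a) in product form
    have hWle : ∀ q : S × A,
        ∑ p : S × A, docc p.1 p.2 * (P p.1 p.2 q.1 * π q.1 q.2) ≤ docc q.1 q.2 / γ := by
      intro q
      have h1 : ∑ p : S × A, docc p.1 p.2 * (P p.1 p.2 q.1 * π q.1 q.2)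
          = (∑ s', ∑ a', docc s' a' * P s' a' q.1) * π q.1 q.2 := by
        rw [Fintype.sum_prod_type (f := fun p : S × A =>
          docc p.1 p.2 * (P p.1 p.2 q.1 * π q.1 q.2))]
        rw [Finset.sum_mul]
        refine Finset.sum_congr rfl fun s' _ => ?_
        rw [Finset.sum_mul]
        exact Finset.sum_congr rfl fun a' _ => by ring
      rw [h1, le_div_iff₀ hγ0]
      calc (∑ s', ∑ a', docc s' a' * P s' a' q.1) * π q.1 q.2 * γ
          = γ * ((∑ s', ∑ a', docc s' a' * P s' a' q.1) * π q.1 q.2) := by ring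
        _ ≤ docc q.1 q.2 := hkey q.1 q.2
    have hNsq : ∑ p : S × A, docc p.1 p.2 * (T g₁ p.1 p.2 - T g₂ p.1 p.2)^2
        ≤ γ * ∑ p : S × A, docc p.1 p.2 * (g₁ p.1 p.2 - g₂ p.1 p.2)^2 := by
      calc ∑ p : S × A, docc p.1 p.2 * (T g₁ p.1 p.2 - T g₂ p.1 p.2)^2
          ≤ ∑ p : S × A, γ^2 * ∑ q : S × A,
              docc p.1 p.2 * ((P p.1 p.2 q.1 * π q.1 q.2) * (g₁ q.1 q.2 - g₂ q.1 q.2)^2) :=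
            Finset.sum_le_sum fun p _ => hb p.1 p.2
        _ = γ^2 * ∑ q : S × A,
              (∑ p : S × A, docc p.1 p.2 * (P p.1 p.2 q.1 * π q.1 q.2)) *
                (g₁ q.1 q.2 - g₂ q.1 q.2)^2 := by
            rw [← Finset.mul_sum]
            congr 1
            rw [Finset.sum_comm]
            refine Finset.sum_congr rfl fun q _ => ?_
            rw [Finset.sum_mul]
            exact Finset.sum_congr rfl fun p _ => by ring
        _ ≤ γ^2 * ∑ q : S × A, (docc q.1 q.2 / γ) * (g₁ q.1 q.2 - g₂ q.1 q.2)^2 := by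
            refine mul_le_mul_of_nonneg_left ?_ (sq_nonneg γ)
            exact Finset.sum_le_sum fun q _ =>
              mul_le_mul_of_nonneg_right (hWle q) (sq_nonneg _)
        _ = γ * ∑ p : S × A, docc p.1 p.2 * (g₁ p.1 p.2 - g₂ p.1 p.2)^2 := by
            rw [Finset.mul_sum, Finset.mul_sum]
            refine Finset.sum_congr rfl fun q _ => ?_
            field_simp
    rw [hL2, hL2]
    rw [hconv, hconv]
    calc Real.sqrt (∑ p : S × A, docc p.1 p.2 * (T g₁ p.1 p.2 - T g₂ p.1 p.2)^2)
        ≤ Real.sqrt (γ * ∑ p : S × A, docc p.1 p.2 * (g₁ p.1 p.2 - g₂ p.1 p.2)^2) :=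
          Real.sqrt_le_sqrt hNsq
      _ = Real.sqrt γ * Real.sqrt (∑ p : S × A, docc p.1 p.2 * (g₁ p.1 p.2 - g₂ p.1 p.2)^2) :=
          Real.sqrt_mul hγle _
  -- base case: L2 of f0 - T f0 is at most 1
  have he0 : L2 (fun s a => f 0 s a - T (f 0) s a) ≤ 1 := by
    rw [hL2]
    have hpt : ∀ s a, f 0 s a - T (f 0) s a = -r s a := by
      intro s a
      rw [hf0, hT]
      simp
    calc Real.sqrt (∑ s, ∑ a, docc s a * ((fun s a => f 0 s a - T (f 0) s a) s a)^2)
        ≤ Real.sqrt (∑ s, ∑ a, docc s a * 1) := by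
          apply Real.sqrt_le_sqrt
          refine Finset.sum_le_sum fun s _ => Finset.sum_le_sum fun a _ => ?_
          refine mul_le_mul_of_nonneg_left ?_ (hd0 s a)
          have : (fun s a => f 0 s a - T (f 0) s a) s a = -r s a := hpt s a
          rw [this]
          rw [show (-r s a)^2 = (r s a)^2 by ring, sq_le_one_iff_abs_le_one]
          exact hr s a
      _ = 1 := by
          simp only [mul_one, hdsum, Real.sqrt_one]
  -- main induction
  set sγ := Real.sqrt γ with hsγ
  have hs0 : 0 ≤ sγ := Real.sqrt_nonneg γ
  have hs1 : sγ < 1 := by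
    rw [hsγ, show (1:ℝ) = Real.sqrt 1 from Real.sqrt_one.symm]
    exact Real.sqrt_lt_sqrt hγle hγ1
  have hsq : sγ^2 = γ := Real.sq_sqrt hγle
  have hCnn : 0 ≤ 4*η/(1-γ) := div_nonneg (by linarith) h1γ.le
  have main : ∀ k, k ≤ K →
      L2 (fun s a => f k s a - T (f k) s a) ≤ 4*η/(1-γ) + sγ ^ k := by
    intro k
    induction k with
    | zero =>
      intro _
      rw [pow_zero]
      linarith [he0]
    | succ k ih =>
      intro hk
      have hkK : k ≤ K := le_trans (Nat.le_succ k) hk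
      have ihk := ih hkK
      have hregk : L2 (fun s a => f (k+1) s a - T (f k) s a) ≤ η := by
        have h := hreg (k+1) (Nat.le_add_left 1 k) hk
        simpa using h
      have t1 : L2 (fun s a => f (k+1) s a - T (f (k+1)) s a)
          ≤ L2 (fun s a => f (k+1) s a - T (f k) s a)
            + L2 (fun s a => T (f k) s a - T (f (k+1)) s a) :=
        htri _ _ _ (fun s a => by ring)
      have t2 : L2 (fun s a => T (f k) s a - T (f (k+1)) s a)
          ≤ sγ * L2 (fun s a => f k s a - f (k+1) s a) := hcontr _ _
      have t3 : L2 (fun s a => f k s a - f (k+1) s a)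
          ≤ L2 (fun s a => f k s a - T (f k) s a)
            + L2 (fun s a => T (f k) s a - f (k+1) s a) :=
        htri _ _ _ (fun s a => by ring)
      have t4 : L2 (fun s a => T (f k) s a - f (k+1) s a) ≤ η := by
        rw [hsymm]; exact hregk
      have hcomb : L2 (fun s a => f (k+1) s a - T (f (k+1)) s a)
          ≤ η + sγ * ((4*η/(1-γ) + sγ ^ k) + η) := by
        have t5 : L2 (fun s a => f k s a - f (k+1) s a) ≤ (4*η/(1-γ) + sγ ^ k) + η := by
          linarith
        have t6 : sγ * L2 (fun s a => f k s a - f (k+1) s a)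
            ≤ sγ * ((4*η/(1-γ) + sγ ^ k) + η) :=
          mul_le_mul_of_nonneg_left t5 hs0
        linarith
      -- algebraic finish
      have hfin : (1+sγ)*η*(1-sγ^2) + sγ*(4*η) ≤ 4*η := by
        nlinarith [mul_nonneg (mul_nonneg hη (sq_nonneg (1-sγ)))
          (by linarith : (0:ℝ) ≤ 3 + sγ)]
      have hkey2 : η + sγ * ((4*η/(1-γ) + sγ ^ k) + η)
          ≤ 4*η/(1-γ) + sγ ^ (k+1) := by
        have hγeq : 1 - γ = 1 - sγ^2 := by rw [hsq]
        have e : 4*η/(1-γ) + sγ ^ (k+1) - (η + sγ * ((4*η/(1-γ) + sγ ^ k) + η))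
            = (4*η - ((1+sγ)*η*(1-γ) + sγ*(4*η))) / (1-γ) := by
          field_simp
          ring
        have hnum : 0 ≤ 4*η - ((1+sγ)*η*(1-γ) + sγ*(4*η)) := by
          rw [hγeq]; linarith
        have := div_nonneg hnum h1γ.le
        linarith [e ▸ this]
      linarith
  -- conclude
  intro k hk1 hkK
  have hm := main k hkK
  have hpow : γ ^ ((k : ℝ) / 2) = sγ ^ k := by
    rw [show ((k:ℝ)/2) = (1/2) * (k:ℝ) by ring, Real.rpow_mul hγle,
      Real.rpow_natCast, hsγ, Real.sqrt_eq_rpow]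
  rw [hpow]
  exact hm
end

section
/- Lipschitz stability of constrained least-squares in target: For target vectors ϑ₁, ϑ₂ ∈ B_W, define θ_{ϑᵢ} = argmin_{||θ||≤W} E[(r + γ ϑᵢᵀφ(s',π) − θᵀφ(s,a))²]. Then ||θ_{ϑ₁} − θ_{ϑ₂}||²_Σ ≤ 2γW||ϑ₁ − ϑ₂||₂, where Σ = E[φ(s,a)φ(s,a)ᵀ], and ||φ||₂ ≤ 1 everywhere. -/
/-! The loss `θ ↦ ∑ ν (c - ⟪θ, φ⟫)²` is quadratic, so a minimiser `θ` over a convex set `K`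
satisfies the variational inequality `∑ ν (c - ⟪θ, φ⟫) ⟪θ' - θ, φ⟫ ≤ 0` for every `θ' ∈ K`.
Adding these inequalities for the two minimisers, each tested against the other, bounds
`‖θ₁ - θ₂‖²_Σ` by the correlation `∑ ν (c₁ - c₂) ⟪θ₁ - θ₂, φ⟫`. Here
`c₁ - c₂ = γ ⟪ϑ₁ - ϑ₂, ψ⟫`, and Cauchy–Schwarz bounds the two factors by `γ ‖ϑ₁ - ϑ₂‖` and `2W`. -/

open Finset Filter Topology Metric
open scoped RealInnerProductSpace

lemma nonpos_of_forall_two_mul_le_sq_mul {S Q : ℝ}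
    (h : ∀ t ∈ Set.Ioo (0 : ℝ) 1, 2 * t * S ≤ t ^ 2 * Q) : S ≤ 0 := by
  have hev : ∀ᶠ t in 𝓝[>] (0 : ℝ), 2 * S ≤ t * Q := by
    filter_upwards [Ioo_mem_nhdsGT one_pos] with t ht
    have := h t ht
    nlinarith [ht.1]
  have hlim : Tendsto (fun t : ℝ => t * Q) (𝓝[>] 0) (𝓝 0) :=
    ((continuous_mul_const Q).tendsto' 0 0 (zero_mul Q)).mono_left nhdsWithin_le_nhds
  linarith [ge_of_tendsto hlim hev]

lemma abs_real_inner_le_norm_of_norm_le_one {E : Type*} [NormedAddCommGroup E]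
    [InnerProductSpace ℝ E] (x : E) {y : E} (hy : ‖y‖ ≤ 1) : |⟪x, y⟫| ≤ ‖x‖ :=
  (abs_real_inner_le_norm x y).trans (mul_le_of_le_one_right (norm_nonneg x) hy)

lemma sum_mul_mul_le_of_abs_le {Ω : Type*} [Fintype Ω] {ν a b : Ω → ℝ} {A B : ℝ}
    (hν0 : ∀ ω, 0 ≤ ν ω) (hν1 : ∑ ω, ν ω = 1) (ha : ∀ ω, |a ω| ≤ A) (hb : ∀ ω, |b ω| ≤ B) :
    ∑ ω, ν ω * a ω * b ω ≤ A * B := by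
  calc ∑ ω, ν ω * a ω * b ω ≤ ∑ ω, ν ω * (A * B) := by
        refine sum_le_sum fun ω _ => ?_
        rw [mul_assoc]
        refine mul_le_mul_of_nonneg_left ((le_abs_self _).trans ?_) (hν0 ω)
        rw [abs_mul]
        exact mul_le_mul (ha ω) (hb ω) (abs_nonneg _) ((abs_nonneg _).trans (ha ω))
    _ = A * B := by rw [← sum_mul, hν1, one_mul]

section WeightedLeastSquares

variable {Ω E : Type*} [Fintype Ω] [NormedAddCommGroup E] [InnerProductSpace ℝ E]
  {ν : Ω → ℝ} {φ : Ω → E}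

def weightedSqLoss (ν : Ω → ℝ) (φ : Ω → E) (c : Ω → ℝ) (θ : E) : ℝ :=
  ∑ ω, ν ω * (c ω - ⟪θ, φ ω⟫) ^ 2

lemma weightedSqLoss_add_smul (c : Ω → ℝ) (θ δ : E) (t : ℝ) :
    weightedSqLoss ν φ c (θ + t • δ) = weightedSqLoss ν φ c θ
      - 2 * t * ∑ ω, ν ω * (c ω - ⟪θ, φ ω⟫) * ⟪δ, φ ω⟫ + t ^ 2 * ∑ ω, ν ω * ⟪δ, φ ω⟫ ^ 2 := by
  simp only [weightedSqLoss, mul_sum, ← sum_sub_distrib, ← sum_add_distrib]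
  refine sum_congr rfl fun ω _ => ?_
  rw [inner_add_left, real_inner_smul_left]
  ring

lemma IsMinOn.sum_mul_residual_mul_inner_nonpos {c : Ω → ℝ} {K : Set E} {θ θ' : E}
    (hmin : IsMinOn (weightedSqLoss ν φ c) K θ) (hK : Convex ℝ K) (hθ : θ ∈ K) (hθ' : θ' ∈ K) :
    ∑ ω, ν ω * (c ω - ⟪θ, φ ω⟫) * ⟪θ' - θ, φ ω⟫ ≤ 0 := by
  refine nonpos_of_forall_two_mul_le_sq_mul (Q := ∑ ω, ν ω * ⟪θ' - θ, φ ω⟫ ^ 2) fun t ht => ?_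
  have hle : weightedSqLoss ν φ c θ ≤ weightedSqLoss ν φ c (θ + t • (θ' - θ)) :=
    hmin (hK.add_smul_sub_mem hθ hθ' ⟨ht.1.le, ht.2.le⟩)
  rw [weightedSqLoss_add_smul] at hle
  linarith

lemma sum_mul_inner_sub_sq_le_of_isMinOn {c₁ c₂ : Ω → ℝ} {K : Set E} {θ₁ θ₂ : E}
    (hK : Convex ℝ K) (h₁ : IsMinOn (weightedSqLoss ν φ c₁) K θ₁)
    (h₂ : IsMinOn (weightedSqLoss ν φ c₂) K θ₂) (hθ₁ : θ₁ ∈ K) (hθ₂ : θ₂ ∈ K) :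
    ∑ ω, ν ω * ⟪θ₁ - θ₂, φ ω⟫ ^ 2 ≤ ∑ ω, ν ω * (c₁ ω - c₂ ω) * ⟪θ₁ - θ₂, φ ω⟫ := by
  have hsum : ∑ ω, ν ω * (c₁ ω - ⟪θ₁, φ ω⟫) * ⟪θ₂ - θ₁, φ ω⟫
        + ∑ ω, ν ω * (c₂ ω - ⟪θ₂, φ ω⟫) * ⟪θ₁ - θ₂, φ ω⟫
      = ∑ ω, ν ω * ⟪θ₁ - θ₂, φ ω⟫ ^ 2 - ∑ ω, ν ω * (c₁ ω - c₂ ω) * ⟪θ₁ - θ₂, φ ω⟫ := by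
    rw [← sum_add_distrib, ← sum_sub_distrib]
    refine sum_congr rfl fun ω _ => ?_
    simp only [inner_sub_left]
    ring
  linarith [h₁.sum_mul_residual_mul_inner_nonpos hK hθ₁ hθ₂,
    h₂.sum_mul_residual_mul_inner_nonpos hK hθ₂ hθ₁]

end WeightedLeastSquares

theorem least_squares_target_lipschitz_general
    (d : ℕ) (Ω : Type) [Fintype Ω]
    (ν : Ω → ℝ) (φ ψ : Ω → EuclideanSpace ℝ (Fin d)) (r : Ω → ℝ)
    (γ W : ℝ) (hγ0 : 0 ≤ γ)
    (hν0 : ∀ ω, 0 ≤ ν ω) (hν1 : ∑ ω, ν ω = 1)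
    (hφ : ∀ ω, ‖φ ω‖ ≤ 1) (hψ : ∀ ω, ‖ψ ω‖ ≤ 1)
    (ϑ₁ ϑ₂ θ₁ θ₂ : EuclideanSpace ℝ (Fin d))
    (hθ₁W : ‖θ₁‖ ≤ W) (hθ₂W : ‖θ₂‖ ≤ W)
    (hθ₁ : ∀ θ : EuclideanSpace ℝ (Fin d), ‖θ‖ ≤ W →
      ∑ ω, ν ω * (r ω + γ * (inner ℝ ϑ₁ (ψ ω) : ℝ) - (inner ℝ θ₁ (φ ω) : ℝ)) ^ 2
        ≤ ∑ ω, ν ω * (r ω + γ * (inner ℝ ϑ₁ (ψ ω) : ℝ) - (inner ℝ θ (φ ω) : ℝ)) ^ 2)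
    (hθ₂ : ∀ θ : EuclideanSpace ℝ (Fin d), ‖θ‖ ≤ W →
      ∑ ω, ν ω * (r ω + γ * (inner ℝ ϑ₂ (ψ ω) : ℝ) - (inner ℝ θ₂ (φ ω) : ℝ)) ^ 2
        ≤ ∑ ω, ν ω * (r ω + γ * (inner ℝ ϑ₂ (ψ ω) : ℝ) - (inner ℝ θ (φ ω) : ℝ)) ^ 2) :
    ∑ ω, ν ω * ((inner ℝ (θ₁ - θ₂) (φ ω) : ℝ)) ^ 2 ≤ 2 * γ * W * ‖ϑ₁ - ϑ₂‖ := by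
  have hstable := sum_mul_inner_sub_sq_le_of_isMinOn (convex_closedBall 0 W)
    (fun θ hθ => hθ₁ θ (mem_closedBall_zero_iff.mp hθ))
    (fun θ hθ => hθ₂ θ (mem_closedBall_zero_iff.mp hθ))
    (mem_closedBall_zero_iff.mpr hθ₁W) (mem_closedBall_zero_iff.mpr hθ₂W)
  have htarget : ∀ ω, |r ω + γ * ⟪ϑ₁, ψ ω⟫ - (r ω + γ * ⟪ϑ₂, ψ ω⟫)| ≤ γ * ‖ϑ₁ - ϑ₂‖ := by
    intro ω
    rw [show r ω + γ * ⟪ϑ₁, ψ ω⟫ - (r ω + γ * ⟪ϑ₂, ψ ω⟫) = γ * ⟪ϑ₁ - ϑ₂, ψ ω⟫ by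
      rw [inner_sub_left]; ring, abs_mul, abs_of_nonneg hγ0]
    exact mul_le_mul_of_nonneg_left (abs_real_inner_le_norm_of_norm_le_one _ (hψ ω)) hγ0
  have hfit : ∀ ω, |⟪θ₁ - θ₂, φ ω⟫| ≤ 2 * W := fun ω =>
    calc |⟪θ₁ - θ₂, φ ω⟫| ≤ ‖θ₁ - θ₂‖ := abs_real_inner_le_norm_of_norm_le_one _ (hφ ω)
      _ ≤ ‖θ₁‖ + ‖θ₂‖ := norm_sub_le θ₁ θ₂
      _ ≤ 2 * W := by linarith
  calc _ ≤ _ := hstable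
    _ ≤ γ * ‖ϑ₁ - ϑ₂‖ * (2 * W) := sum_mul_mul_le_of_abs_le hν0 hν1 htarget hfit
    _ = 2 * γ * W * ‖ϑ₁ - ϑ₂‖ := by ring

theorem least_squares_target_lipschitz
    (d : ℕ) (Ω : Type) [Fintype Ω]
    (ν : Ω → ℝ) (φ ψ : Ω → EuclideanSpace ℝ (Fin d)) (r : Ω → ℝ)
    (γ W : ℝ) (hγ0 : 0 ≤ γ) (hγ1 : γ < 1) (hW : 0 < W)
    (hν0 : ∀ ω, 0 ≤ ν ω) (hν1 : ∑ ω, ν ω = 1)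
    (hφ : ∀ ω, ‖φ ω‖ ≤ 1) (hψ : ∀ ω, ‖ψ ω‖ ≤ 1) (hr : ∀ ω, |r ω| ≤ 1)
    (ϑ₁ ϑ₂ θ₁ θ₂ : EuclideanSpace ℝ (Fin d))
    (hϑ₁ : ‖ϑ₁‖ ≤ W) (hϑ₂ : ‖ϑ₂‖ ≤ W)
    (hθ₁W : ‖θ₁‖ ≤ W) (hθ₂W : ‖θ₂‖ ≤ W)
    (hθ₁ : ∀ θ : EuclideanSpace ℝ (Fin d), ‖θ‖ ≤ W →
      ∑ ω, ν ω * (r ω + γ * (inner ℝ ϑ₁ (ψ ω) : ℝ) - (inner ℝ θ₁ (φ ω) : ℝ)) ^ 2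
        ≤ ∑ ω, ν ω * (r ω + γ * (inner ℝ ϑ₁ (ψ ω) : ℝ) - (inner ℝ θ (φ ω) : ℝ)) ^ 2)
    (hθ₂ : ∀ θ : EuclideanSpace ℝ (Fin d), ‖θ‖ ≤ W →
      ∑ ω, ν ω * (r ω + γ * (inner ℝ ϑ₂ (ψ ω) : ℝ) - (inner ℝ θ₂ (φ ω) : ℝ)) ^ 2
        ≤ ∑ ω, ν ω * (r ω + γ * (inner ℝ ϑ₂ (ψ ω) : ℝ) - (inner ℝ θ (φ ω) : ℝ)) ^ 2) :
    ∑ ω, ν ω * ((inner ℝ (θ₁ - θ₂) (φ ω) : ℝ)) ^ 2 ≤ 2 * γ * W * ‖ϑ₁ - ϑ₂‖ :=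
  least_squares_target_lipschitz_general d Ω ν φ ψ r γ W hγ0 hν0 hν1 hφ hψ ϑ₁ ϑ₂ θ₁ θ₂ hθ₁W hθ₂W hθ₁
    hθ₂
end

section
/- Linear Bellman completeness implies existence of a linear transition model: Suppose φ : S×A → R^d has positive definite covariance Σ = E_ν[φφᵀ] under ν, and suppose for every w₁ ∈ B_W there exists w₂ ∈ B_W with E_ν[(w₂ᵀφ(s,a) − r(s,a) − γ E_{s'∼P(s,a)}[w₁ᵀφ(s',π)])²] = 0. Then there exist ρ ∈ B_W and M ∈ R^{d×d} such that E_ν[||Mφ(s,a) − γE_{s'∼P(s,a)}[φ(s',π)]||²₂ + (ρᵀφ(s,a) − r(s,a))²] = 0 and ||M||₂ ≤ sqrt(1 − ||ρ||²₂/W²). -/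
/-!
Positive definiteness makes `L v = (ν ω ⟪v, φ ω⟫)_ω` injective, and Bellman completeness says
`L w₂ = ν r + γ N w₁` on the ball, with `N` the same map for `nxt`. The case `w₁ = 0` gives `ρ`;
since the ball spans, `γ N = L ∘ A` for a linear `A`, and injectivity of `L` gives
`ρ + A w = w₂ ∈ B_W` for all `w ∈ B_W`. Applied at `± w`, the parallelogram law gives
`‖ρ‖² + ‖A w‖² ≤ W²`, i.e. `‖A‖ ≤ √(1 - ‖ρ‖²/W²)`; the model is `M = A†`, and `‖A†‖ = ‖A‖`.
-/

open Finset Function Metric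
open scoped InnerProductSpace

theorem sum_mul_sq_eq_zero_iff {Ω : Type*} [Fintype Ω] {ν f : Ω → ℝ} (hν : ∀ ω, 0 ≤ ν ω) :
    ∑ ω, ν ω * f ω ^ 2 = 0 ↔ ∀ ω, ν ω * f ω = 0 := by
  rw [sum_eq_zero_iff_of_nonneg fun ω _ => mul_nonneg (hν ω) (sq_nonneg _)]
  simp

section WeightedInner

variable {Ω E : Type*} [NormedAddCommGroup E] [InnerProductSpace ℝ E]

/-- Weighting by `ν`, instead of restricting to its support, turns `ν`-a.e. equalities into
equalities of functions. -/
def weightedInner (ν : Ω → ℝ) (φ : Ω → E) : E →ₗ[ℝ] Ω → ℝ where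
  toFun v ω := ν ω * ⟪v, φ ω⟫_ℝ
  map_add' v w := by ext ω; simp [inner_add_left, mul_add]
  map_smul' c v := by ext ω; simp [real_inner_smul_left, mul_left_comm]

@[simp]
theorem weightedInner_apply (ν : Ω → ℝ) (φ : Ω → E) (v : E) (ω : Ω) :
    weightedInner ν φ v ω = ν ω * ⟪v, φ ω⟫_ℝ :=
  rfl

theorem weightedInner_injective [Fintype Ω] {ν : Ω → ℝ} {φ : Ω → E} (hν : ∀ ω, 0 ≤ ν ω)
    (hpd : ∀ x : E, x ≠ 0 → 0 < ∑ ω, ν ω * ⟪x, φ ω⟫_ℝ ^ 2) :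
    Injective (weightedInner ν φ) := by
  refine (injective_iff_map_eq_zero _).2 fun x hx => ?_
  by_contra hne
  have hsum : ∑ ω, ν ω * ⟪x, φ ω⟫_ℝ ^ 2 = 0 :=
    (sum_mul_sq_eq_zero_iff hν).2 fun ω => congrFun hx ω
  exact (hpd x hne).ne' hsum

end WeightedInner

section AffineLift

variable {E F G : Type*} [NormedAddCommGroup E] [NormedSpace ℝ E]
  [NormedAddCommGroup F] [NormedSpace ℝ F] [AddCommGroup G] [Module ℝ G]

theorem LinearMap.range_le_range_of_forall_closedBall {L : E →ₗ[ℝ] G} {K : F →ₗ[ℝ] G} {b : G}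
    {W : ℝ} (hW : 0 < W) (h : ∀ w, ‖w‖ ≤ W → ∃ v, L v = b + K w) :
    LinearMap.range K ≤ LinearMap.range L := by
  obtain ⟨ρ, hρ⟩ := h 0 (by simpa using hW.le)
  have hball : closedBall (0 : F) W ⊆ (LinearMap.range L).comap K := fun w hw => by
    obtain ⟨v, hv⟩ := h w (by simpa using hw)
    exact ⟨v - ρ, by simp [hv, hρ]⟩
  have htop : (LinearMap.range L).comap K = ⊤ :=
    Submodule.eq_top_of_nonempty_interior' _
      ⟨0, interior_mono hball (by simpa [interior_closedBall _ hW.ne'] using hW)⟩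
  rw [LinearMap.range_le_iff_comap, htop]

theorem LinearMap.exists_affine_lift_of_forall_closedBall {L : E →ₗ[ℝ] G} (hL : Injective L)
    {b : G} {K : F →ₗ[ℝ] G} {W : ℝ} (hW : 0 < W)
    (h : ∀ w, ‖w‖ ≤ W → ∃ v, ‖v‖ ≤ W ∧ L v = b + K w) :
    ∃ (ρ : E) (A : F →ₗ[ℝ] E), L ρ = b ∧ L ∘ₗ A = K ∧ ∀ w, ‖w‖ ≤ W → ‖ρ + A w‖ ≤ W := by
  obtain ⟨g, hg⟩ := L.exists_leftInverse_of_injective (LinearMap.ker_eq_bot.2 hL)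
  have hrange := LinearMap.range_le_range_of_forall_closedBall hW fun w hw =>
    (h w hw).imp fun _ => And.right
  have hLg : L ∘ₗ g ∘ₗ K = K := by
    ext w
    obtain ⟨u, hu⟩ := hrange ⟨w, rfl⟩
    simp only [LinearMap.comp_apply, ← hu, ← LinearMap.comp_apply g L, hg, LinearMap.id_apply]
  obtain ⟨ρ, -, hρ⟩ := h 0 (by simpa using hW.le)
  rw [map_zero, add_zero] at hρ
  refine ⟨ρ, g ∘ₗ K, hρ, hLg, fun w hw => ?_⟩
  obtain ⟨v, hv, hLv⟩ := h w hw
  have hv_eq : ρ + (g ∘ₗ K) w = v := hL (by rw [map_add, ← LinearMap.comp_apply, hLg, hρ, hLv])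
  rwa [hv_eq]

end AffineLift

section OperatorNorm

variable {E F : Type*} [NormedAddCommGroup E] [NormedSpace ℝ E]
  [NormedAddCommGroup F] [InnerProductSpace ℝ F]

theorem norm_sq_add_norm_sq_le_of_norm_add_le_of_norm_sub_le {ρ x : F} {W : ℝ}
    (h₁ : ‖ρ + x‖ ≤ W) (h₂ : ‖ρ - x‖ ≤ W) : ‖ρ‖ ^ 2 + ‖x‖ ^ 2 ≤ W ^ 2 := by
  have := parallelogram_law_with_norm ℝ ρ x
  nlinarith [norm_nonneg (ρ + x), norm_nonneg (ρ - x)]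

theorem ContinuousLinearMap.opNorm_le_sqrt_of_forall_norm_add_le {A : E →L[ℝ] F} {ρ : F}
    {W : ℝ} (hW : 0 < W) (h : ∀ w, ‖w‖ ≤ W → ‖ρ + A w‖ ≤ W) :
    ‖A‖ ≤ √(1 - ‖ρ‖ ^ 2 / W ^ 2) := by
  refine opNorm_le_of_unit_norm (Real.sqrt_nonneg _) fun x hx => Real.le_sqrt_of_sq_le ?_
  have hWx : ‖W • x‖ ≤ W := by simp [norm_smul, hx, abs_of_pos hW]
  have key := norm_sq_add_norm_sq_le_of_norm_add_le_of_norm_sub_le (h _ hWx)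
    (by simpa [sub_eq_add_neg] using h (-(W • x)) (by rwa [norm_neg]))
  rw [map_smul, norm_smul, Real.norm_of_nonneg hW.le, mul_pow] at key
  rw [le_sub_iff_add_le, ← le_sub_iff_add_le', div_le_iff₀ (by positivity)]
  nlinarith

end OperatorNorm

open ContinuousLinearMap in
theorem linear_bc_implies_linear_model_general
    (d : ℕ) (Ω : Type) [Fintype Ω]
    (ν : Ω → ℝ) (φ nxt : Ω → EuclideanSpace ℝ (Fin d)) (r : Ω → ℝ)
    (γ W : ℝ) (hW : 0 < W)
    (hν0 : ∀ ω, 0 ≤ ν ω)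
    -- Σ(φ) positive definite: w ↦ wᵀφ is injective in L²(ν)
    (hpd : ∀ x : EuclideanSpace ℝ (Fin d), x ≠ 0 →
      0 < ∑ ω, ν ω * (inner ℝ x (φ ω) : ℝ) ^ 2)
    -- exact linear Bellman completeness at radius W
    (hbc : ∀ w₁ : EuclideanSpace ℝ (Fin d), ‖w₁‖ ≤ W →
      ∃ w₂ : EuclideanSpace ℝ (Fin d), ‖w₂‖ ≤ W ∧
        ∑ ω, ν ω *
          ((inner ℝ w₂ (φ ω) : ℝ) - r ω - γ * (inner ℝ w₁ (nxt ω) : ℝ)) ^ 2 = 0) :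
    ∃ (ρ : EuclideanSpace ℝ (Fin d))
      (M : EuclideanSpace ℝ (Fin d) →L[ℝ] EuclideanSpace ℝ (Fin d)),
      ‖ρ‖ ≤ W ∧ ‖M‖ ≤ Real.sqrt (1 - ‖ρ‖ ^ 2 / W ^ 2) ∧
      ∑ ω, ν ω *
        (‖M (φ ω) - γ • nxt ω‖ ^ 2 + ((inner ℝ ρ (φ ω) : ℝ) - r ω) ^ 2) = 0 := by
  have hlin : ∀ w₁ : EuclideanSpace ℝ (Fin d), ‖w₁‖ ≤ W → ∃ w₂, ‖w₂‖ ≤ W ∧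
      weightedInner ν φ w₂ = (fun ω => ν ω * r ω) + γ • weightedInner ν nxt w₁ := by
    intro w₁ hw₁
    obtain ⟨w₂, hw₂, hsum⟩ := hbc w₁ hw₁
    refine ⟨w₂, hw₂, funext fun ω => ?_⟩
    have := (sum_mul_sq_eq_zero_iff hν0).1 hsum ω
    simp only [weightedInner_apply, Pi.add_apply, Pi.smul_apply, smul_eq_mul]
    linarith
  obtain ⟨ρ, A, hρ, hA, hball⟩ := LinearMap.exists_affine_lift_of_forall_closedBall
    (K := γ • weightedInner ν nxt) (weightedInner_injective hν0 hpd) hW hlin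
  let M := adjoint (LinearMap.toContinuousLinearMap A)
  refine ⟨ρ, M, by simpa using hball 0 (by simpa using hW.le), ?_, ?_⟩
  · rw [LinearIsometryEquiv.norm_map]
    exact opNorm_le_sqrt_of_forall_norm_add_le hW hball
  refine Finset.sum_eq_zero fun ω _ => ?_
  rcases eq_or_ne (ν ω) 0 with hω | hω
  · simp [hω]
  have hρω : ⟪ρ, φ ω⟫_ℝ = r ω := mul_left_cancel₀ hω (congrFun hρ ω)
  have hAω : ∀ v, ⟪A v, φ ω⟫_ℝ = γ * ⟪v, nxt ω⟫_ℝ := fun v => mul_left_cancel₀ hω <| by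
    simpa [mul_left_comm] using congrFun (LinearMap.congr_fun hA v) ω
  have hMω : M (φ ω) = γ • nxt ω := ext_inner_right ℝ fun v => by
    rw [adjoint_inner_left, LinearMap.coe_toContinuousLinearMap', ← real_inner_comm (φ ω), hAω,
      real_inner_smul_left, real_inner_comm (nxt ω)]
  simp [hρω, hMω]

theorem linear_bc_implies_linear_model
    (d : ℕ) (Ω : Type) [Fintype Ω]
    (ν : Ω → ℝ) (φ nxt : Ω → EuclideanSpace ℝ (Fin d)) (r : Ω → ℝ)
    (γ W : ℝ) (hγ0 : 0 ≤ γ) (hγ1 : γ < 1) (hW : 0 < W)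
    (hν0 : ∀ ω, 0 ≤ ν ω) (hν1 : ∑ ω, ν ω = 1)
    (hr : ∀ ω, |r ω| ≤ 1)
    -- Σ(φ) positive definite: w ↦ wᵀφ is injective in L²(ν)
    (hpd : ∀ x : EuclideanSpace ℝ (Fin d), x ≠ 0 →
      0 < ∑ ω, ν ω * (inner ℝ x (φ ω) : ℝ) ^ 2)
    -- exact linear Bellman completeness at radius W
    (hbc : ∀ w₁ : EuclideanSpace ℝ (Fin d), ‖w₁‖ ≤ W →
      ∃ w₂ : EuclideanSpace ℝ (Fin d), ‖w₂‖ ≤ W ∧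
        ∑ ω, ν ω *
          ((inner ℝ w₂ (φ ω) : ℝ) - r ω - γ * (inner ℝ w₁ (nxt ω) : ℝ)) ^ 2 = 0) :
    ∃ (ρ : EuclideanSpace ℝ (Fin d))
      (M : EuclideanSpace ℝ (Fin d) →L[ℝ] EuclideanSpace ℝ (Fin d)),
      ‖ρ‖ ≤ W ∧ ‖M‖ ≤ Real.sqrt (1 - ‖ρ‖ ^ 2 / W ^ 2) ∧
      ∑ ω, ν ω *
        (‖M (φ ω) - γ • nxt ω‖ ^ 2 + ((inner ℝ ρ (φ ω) : ℝ) - r ω) ^ 2) = 0 :=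
  linear_bc_implies_linear_model_general d Ω ν φ nxt r γ W hW hν0 hpd hbc
end

section
/- Converse direction of linear BC equivalence: Suppose φ : S×A → R^d, ρ ∈ R^d, and M ∈ R^{d×d} with spectral norm ||M||₂ < 1 satisfy E_ν[||Mφ(s,a) − γE_{s'∼P(s,a)}[φ(s',π)]||²₂ + (ρᵀφ(s,a) − r(s,a))²] = 0. Then for any W ≥ ||ρ||₂/(1 − ||M||₂), φ is exactly linear Bellman complete at radius W: for every w₁ ∈ B_W there exists w₂ ∈ B_W (namely w₂ = ρ + Mᵀw₁) with E_ν[(w₂ᵀφ(s,a) − r(s,a) − γE_{s'∼P(s,a)}[w₁ᵀφ(s',π)])²] = 0. -/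
/-!
Take `w₂ = ρ + M† w₁`. Wherever `ν` charges a state, the vanishing loss forces `M φ = γ • nxt` and
`⟪ρ, φ⟫ = r`, so `⟪w₂, φ⟫ = r + ⟪w₁, M φ⟫ = r + γ ⟪w₁, nxt⟫` and the Bellman residual vanishes there.
The radius is preserved because `‖ρ + M† w₁‖ ≤ ‖ρ‖ + ‖M‖ W ≤ (1 - ‖M‖) W + ‖M‖ W = W`.
-/

open Finset

open scoped InnerProductSpace

lemma sum_mul_eq_zero_of_sum_mul_eq_zero {ι : Type*} {s : Finset ι} {ν f g : ι → ℝ}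
    (hν : ∀ i ∈ s, 0 ≤ ν i) (hf : ∀ i ∈ s, 0 ≤ f i) (hsum : ∑ i ∈ s, ν i * f i = 0)
    (hfg : ∀ i ∈ s, f i = 0 → g i = 0) :
    ∑ i ∈ s, ν i * g i = 0 := by
  have hterm := (sum_eq_zero_iff_of_nonneg fun i hi ↦ mul_nonneg (hν i hi) (hf i hi)).mp hsum
  refine sum_eq_zero fun i hi ↦ ?_
  rcases mul_eq_zero.mp (hterm i hi) with hνi | hfi
  · rw [hνi, zero_mul]
  · rw [hfg i hi hfi, mul_zero]

lemma norm_add_apply_le {E F : Type*} [SeminormedAddCommGroup E] [SeminormedAddCommGroup F]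
    [NormedSpace ℝ E] [NormedSpace ℝ F] (A : E →L[ℝ] F) (hA : ‖A‖ < 1) {ρ : F} {W : ℝ}
    (hW : ‖ρ‖ / (1 - ‖A‖) ≤ W) {w : E} (hw : ‖w‖ ≤ W) :
    ‖ρ + A w‖ ≤ W := by
  have hρ : ‖ρ‖ ≤ (1 - ‖A‖) * W := by
    rwa [div_le_iff₀ (by linarith), mul_comm] at hW
  calc ‖ρ + A w‖ ≤ ‖ρ‖ + ‖A‖ * ‖w‖ := (norm_add_le _ _).trans (by gcongr; exact A.le_opNorm w)
    _ ≤ (1 - ‖A‖) * W + ‖A‖ * W := by gcongr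
    _ = W := by ring

section Bellman

variable {E : Type*} [NormedAddCommGroup E] [InnerProductSpace ℝ E] [CompleteSpace E]

lemma inner_add_adjoint_apply_eq {M : E →L[ℝ] E} {ρ φ nxt : E} {γ r : ℝ}
    (hM : M φ = γ • nxt) (hρ : ⟪ρ, φ⟫_ℝ = r) (w : E) :
    ⟪ρ + M.adjoint w, φ⟫_ℝ = r + γ * ⟪w, nxt⟫_ℝ := by
  rw [inner_add_left, ContinuousLinearMap.adjoint_inner_left, hM, inner_smul_right, hρ]

lemma bellman_residual_eq_zero {M : E →L[ℝ] E} {ρ φ nxt : E} {γ r : ℝ}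
    (hloss : ‖M φ - γ • nxt‖ ^ 2 + (⟪ρ, φ⟫_ℝ - r) ^ 2 = 0) (w : E) :
    (⟪ρ + M.adjoint w, φ⟫_ℝ - r - γ * ⟪w, nxt⟫_ℝ) ^ 2 = 0 := by
  obtain ⟨hM, hρ⟩ := (add_eq_zero_iff_of_nonneg (sq_nonneg _) (sq_nonneg _)).mp hloss
  have hM : M φ = γ • nxt := sub_eq_zero.mp (norm_eq_zero.mp (pow_eq_zero_iff two_ne_zero |>.mp hM))
  have hρ : ⟪ρ, φ⟫_ℝ = r := sub_eq_zero.mp (pow_eq_zero_iff two_ne_zero |>.mp hρ)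
  rw [inner_add_adjoint_apply_eq hM hρ]
  ring

end Bellman

theorem linear_model_implies_linear_bc_general
    (d : ℕ) (Ω : Type) [Fintype Ω]
    (ν : Ω → ℝ) (φ nxt : Ω → EuclideanSpace ℝ (Fin d)) (r : Ω → ℝ)
    (γ : ℝ)
    (hν0 : ∀ ω, 0 ≤ ν ω)
    (ρ : EuclideanSpace ℝ (Fin d))
    (M : EuclideanSpace ℝ (Fin d) →L[ℝ] EuclideanSpace ℝ (Fin d))
    (hM : ‖M‖ < 1)
    (hzero : ∑ ω, ν ω *
      (‖M (φ ω) - γ • nxt ω‖ ^ 2 + ((inner ℝ ρ (φ ω) : ℝ) - r ω) ^ 2) = 0) :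
    ∀ W : ℝ, ‖ρ‖ / (1 - ‖M‖) ≤ W →
      ∀ w₁ : EuclideanSpace ℝ (Fin d), ‖w₁‖ ≤ W →
        ∃ w₂ : EuclideanSpace ℝ (Fin d), ‖w₂‖ ≤ W ∧
          ∑ ω, ν ω *
            ((inner ℝ w₂ (φ ω) : ℝ) - r ω - γ * (inner ℝ w₁ (nxt ω) : ℝ)) ^ 2 = 0 := by
  intro W hW w₁ hw₁
  have hadj : ‖M.adjoint‖ = ‖M‖ := LinearIsometryEquiv.norm_map _ M
  refine ⟨ρ + M.adjoint w₁, norm_add_apply_le _ (hadj ▸ hM) (hadj ▸ hW) hw₁, ?_⟩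
  exact sum_mul_eq_zero_of_sum_mul_eq_zero (fun ω _ ↦ hν0 ω) (fun ω _ ↦ by positivity) hzero
    fun ω _ hloss ↦ bellman_residual_eq_zero hloss w₁

theorem linear_model_implies_linear_bc
    (d : ℕ) (Ω : Type) [Fintype Ω]
    (ν : Ω → ℝ) (φ nxt : Ω → EuclideanSpace ℝ (Fin d)) (r : Ω → ℝ)
    (γ : ℝ) (hγ0 : 0 ≤ γ) (hγ1 : γ < 1)
    (hν0 : ∀ ω, 0 ≤ ν ω) (hν1 : ∑ ω, ν ω = 1)
    (ρ : EuclideanSpace ℝ (Fin d))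
    (M : EuclideanSpace ℝ (Fin d) →L[ℝ] EuclideanSpace ℝ (Fin d))
    (hM : ‖M‖ < 1)
    (hzero : ∑ ω, ν ω *
      (‖M (φ ω) - γ • nxt ω‖ ^ 2 + ((inner ℝ ρ (φ ω) : ℝ) - r ω) ^ 2) = 0) :
    ∀ W : ℝ, ‖ρ‖ / (1 - ‖M‖) ≤ W →
      ∀ w₁ : EuclideanSpace ℝ (Fin d), ‖w₁‖ ≤ W →
        ∃ w₂ : EuclideanSpace ℝ (Fin d), ‖w₂‖ ≤ W ∧
          ∑ ω, ν ω *
            ((inner ℝ w₂ (φ ω) : ℝ) - r ω - γ * (inner ℝ w₁ (nxt ω) : ℝ)) ^ 2 = 0 :=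
  linear_model_implies_linear_bc_general d Ω ν φ nxt r γ hν0 ρ M hM hzero
end

section
/- Spectral norm constraint from invariance of the ball: Let ρ ∈ R^d and M ∈ R^{d×d}. Suppose that for every w ∈ B_W (the Euclidean radius-W ball in R^d), ρ + Mᵀw ∈ B_W. Then ||M||₂ ≤ sqrt(1 − ||ρ||²₂/W²). Moreover, taking w and −w shows ||M||₂ ≤ 1 directly. -/
/-!
Testing the invariance at `w` and at `-w` and adding the two squared bounds, the cross terms
`±2⟪ρ, A w⟫` cancel by the parallelogram law: `‖ρ‖² + ‖A w‖² ≤ W²` on the whole ball `‖w‖ ≤ W`.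
Rescaling to unit vectors gives `‖A‖ ≤ √(W² - ‖ρ‖²) / W = √(1 - ‖ρ‖² / W²) ≤ 1`.
-/

theorem norm_sq_add_norm_sq_le_of_norm_add_le_of_norm_sub_le_s9 {𝕜 E : Type*} [RCLike 𝕜]
    [NormedAddCommGroup E] [InnerProductSpace 𝕜 E] {x y : E} {r : ℝ}
    (hadd : ‖x + y‖ ≤ r) (hsub : ‖x - y‖ ≤ r) : ‖x‖ ^ 2 + ‖y‖ ^ 2 ≤ r ^ 2 := by
  have hadd_sq : ‖x + y‖ ^ 2 ≤ r ^ 2 := pow_le_pow_left₀ (norm_nonneg _) hadd 2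
  have hsub_sq : ‖x - y‖ ^ 2 ≤ r ^ 2 := pow_le_pow_left₀ (norm_nonneg _) hsub 2
  linarith [parallelogram_law_with_norm 𝕜 x y]

theorem ContinuousLinearMap.opNorm_le_div_of_norm_le {𝕜 E F : Type*} [RCLike 𝕜]
    [SeminormedAddCommGroup E] [NormedSpace 𝕜 E] [SeminormedAddCommGroup F] [NormedSpace 𝕜 F]
    (f : E →L[𝕜] F) {r c : ℝ} (hr : 0 < r) (hf : ∀ x, ‖x‖ ≤ r → ‖f x‖ ≤ c) :
    ‖f‖ ≤ c / r := by
  have hc : 0 ≤ c := (norm_nonneg _).trans (hf 0 (by simpa using hr.le))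
  refine f.opNorm_le_of_unit_norm (div_nonneg hc hr.le) fun x hx => ?_
  have hscaled : ‖f ((r : 𝕜) • x)‖ ≤ c :=
    hf _ (by rw [norm_smul, hx, mul_one, RCLike.norm_of_nonneg hr.le])
  rw [map_smul, norm_smul, RCLike.norm_of_nonneg hr.le] at hscaled
  rwa [le_div_iff₀ hr, mul_comm]

theorem spectral_norm_from_ball_invariance
    (d : ℕ) (W : ℝ) (hW : 0 < W)
    (ρ : EuclideanSpace ℝ (Fin d))
    (A : EuclideanSpace ℝ (Fin d) →L[ℝ] EuclideanSpace ℝ (Fin d))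
    (hinv : ∀ w : EuclideanSpace ℝ (Fin d), ‖w‖ ≤ W → ‖ρ + A w‖ ≤ W) :
    ‖A‖ ≤ Real.sqrt (1 - ‖ρ‖ ^ 2 / W ^ 2) ∧ ‖A‖ ≤ 1 := by
  have hbound : ∀ w, ‖w‖ ≤ W → ‖A w‖ ≤ √(W ^ 2 - ‖ρ‖ ^ 2) := fun w hw => by
    have hneg : ‖ρ - A w‖ ≤ W := by
      simpa [sub_eq_add_neg] using hinv (-w) (by rwa [norm_neg])
    have := norm_sq_add_norm_sq_le_of_norm_add_le_of_norm_sub_le_s9 (𝕜 := ℝ) (hinv w hw) hneg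
    exact Real.le_sqrt_of_sq_le (by linarith)
  have hA : ‖A‖ ≤ √(1 - ‖ρ‖ ^ 2 / W ^ 2) := by
    rw [one_sub_div (pow_ne_zero 2 hW.ne'), Real.sqrt_div' _ (sq_nonneg W), Real.sqrt_sq hW.le]
    exact A.opNorm_le_div_of_norm_le hW hbound
  exact ⟨hA, hA.trans (Real.sqrt_le_one.mpr (sub_le_self _ (by positivity)))⟩
end

section
/- If ρ ∈ R^d, M ∈ R^{d×d} with M ≠ 0, and ρ + Mᵀw ∈ B_W for every w ∈ B_W, then ||ρ||₂ < W. -/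
/-!
Taking `w = 0` gives `‖ρ‖ ≤ W`. If `‖ρ‖ = W`, then for every `w` in the ball both `ρ + A w` and
`ρ - A w = ρ + A (-w)` lie in the ball of radius `‖ρ‖`, and the parallelogram law forces `A w = 0`;
a continuous linear map vanishing on a ball is zero.
-/

open Metric

theorem eq_zero_of_norm_add_le_of_norm_sub_le {F : Type*} [NormedAddCommGroup F]
    [InnerProductSpace ℝ F] {x v : F} (h₁ : ‖x + v‖ ≤ ‖x‖) (h₂ : ‖x - v‖ ≤ ‖x‖) : v = 0 := by
  have hpar := parallelogram_law_with_norm ℝ x v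
  have hv : ‖v‖ ^ 2 ≤ 0 := by
    nlinarith [norm_nonneg (x + v), norm_nonneg (x - v), norm_nonneg x]
  exact norm_eq_zero.mp (pow_eq_zero_iff two_ne_zero |>.mp (le_antisymm hv (sq_nonneg _)))

theorem ContinuousLinearMap.eq_zero_of_forall_mem_ball {𝕜 E F : Type*}
    [NontriviallyNormedField 𝕜] [NormedAddCommGroup E] [NormedSpace 𝕜 E]
    [NormedAddCommGroup F] [NormedSpace 𝕜 F] {f : E →L[𝕜] F} {r : ℝ} (hr : 0 < r)
    (hf : ∀ x ∈ ball (0 : E) r, f x = 0) : f = 0 :=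
  norm_le_zero_iff.mp (f.opNorm_le_of_ball hr le_rfl fun x hx => by simp [hf x hx])

theorem ball_invariance_rho_lt
    (d : ℕ) (W : ℝ) (hW : 0 < W)
    (ρ : EuclideanSpace ℝ (Fin d))
    (A : EuclideanSpace ℝ (Fin d) →L[ℝ] EuclideanSpace ℝ (Fin d))
    (hA : A ≠ 0)
    (hinv : ∀ w : EuclideanSpace ℝ (Fin d), ‖w‖ ≤ W → ‖ρ + A w‖ ≤ W) :
    ‖ρ‖ < W := by
  have hρ : ‖ρ‖ ≤ W := by simpa using hinv 0 (by simpa using hW.le)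
  refine hρ.lt_of_ne fun hρW => hA (A.eq_zero_of_forall_mem_ball hW fun w hw => ?_)
  have hw : ‖w‖ ≤ W := (mem_ball_zero_iff.mp hw).le
  refine eq_zero_of_norm_add_le_of_norm_sub_le (x := ρ) ?_ ?_ <;> rw [hρW]
  · exact hinv w hw
  · simpa [sub_eq_add_neg] using hinv (-w) (by simpa using hw)
end

section
/- Approximate version of the BC equivalence: Suppose there exist ρ̂ ∈ B_W and M̂ with ||M̂||₂ ≤ ||M*||₂ < 1 such that E_ν[||M̂φ(s,a) − γE_{s'∼P(s,a)}[φ(s',π)]||²₂ + (ρ̂ᵀφ(s,a) − r(s,a))²] ≤ ε². Then, provided W ≥ ||ρ*||₂/(1 − ||M*||₂) and ||ρ̂||₂ ≤ ||ρ*||₂, we have max_{w₁∈B_W} min_{w₂∈B_W} ||w₂ᵀφ − T^π(w₁ᵀφ)||_{L²(ν)} ≤ ε(1+W), i.e., φ is ε(1+W)-approximately linear Bellman complete. -/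
open Finset

/-!
The witness is `w₂ = ρ̂ + M̂† w₁`. Pointwise,
`⟪w₂, φ⟫ - (r + γ ⟪w₁, φ'⟫) = (⟪ρ̂, φ⟫ - r) + ⟪w₁, M̂ φ - γ φ'⟫`,
so by Minkowski in `L²(ν)` and Cauchy–Schwarz the Bellman residual is at most the reward error
plus `‖w₁‖` times the transition error, each of which the loss bounds by `ε`.
The choice of `W` makes `‖w₂‖ ≤ ‖ρ*‖ + ‖M*‖ W ≤ W`.
-/

section WeightedL2

variable {Ω : Type*} [Fintype Ω] {ν : Ω → ℝ}

theorem sqrt_sum_mul_add_sq_le (hν : ∀ ω, 0 ≤ ν ω) (f g : Ω → ℝ) :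
    √(∑ ω, ν ω * (f ω + g ω) ^ 2) ≤ √(∑ ω, ν ω * f ω ^ 2) + √(∑ ω, ν ω * g ω ^ 2) := by
  let embed (h : Ω → ℝ) : EuclideanSpace ℝ Ω := WithLp.toLp 2 fun ω => √(ν ω) * h ω
  have norm_embed (h : Ω → ℝ) : ‖embed h‖ = √(∑ ω, ν ω * h ω ^ 2) := by
    simp only [embed, EuclideanSpace.norm_eq, Real.norm_eq_abs, sq_abs, mul_pow,
      Real.sq_sqrt (hν _)]
  have embed_add : embed (f + g) = embed f + embed g := by
    ext ω
    simp only [embed, Pi.add_apply, mul_add, WithLp.ofLp_add]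
  have := norm_add_le (embed f) (embed g)
  rwa [← embed_add, norm_embed, norm_embed, norm_embed] at this

theorem sum_mul_le_of_sum_mul_add_le (hν : ∀ ω, 0 ≤ ν ω) {a b : Ω → ℝ} {c : ℝ}
    (hb : ∀ ω, 0 ≤ b ω) (h : ∑ ω, ν ω * (a ω + b ω) ≤ c) : ∑ ω, ν ω * a ω ≤ c :=
  (sum_le_sum fun ω _ =>
    mul_le_mul_of_nonneg_left (le_add_of_nonneg_right (hb ω)) (hν ω)).trans h

theorem sqrt_sum_mul_inner_sq_le {F : Type*} [NormedAddCommGroup F] [InnerProductSpace ℝ F]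
    (hν : ∀ ω, 0 ≤ ν ω) (w : F) (v : Ω → F) :
    √(∑ ω, ν ω * inner ℝ w (v ω) ^ 2) ≤ ‖w‖ * √(∑ ω, ν ω * ‖v ω‖ ^ 2) := by
  rw [← Real.sqrt_sq (norm_nonneg w), ← Real.sqrt_mul (sq_nonneg _), mul_sum]
  refine Real.sqrt_le_sqrt (sum_le_sum fun ω _ => ?_)
  have cauchy_schwarz : inner ℝ w (v ω) ^ 2 ≤ (‖w‖ * ‖v ω‖) ^ 2 := by
    rw [← sq_abs]
    exact pow_le_pow_left₀ (abs_nonneg _) (abs_real_inner_le_norm w (v ω)) 2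
  nlinarith [hν ω]

end WeightedL2

open ContinuousLinearMap in
theorem norm_add_adjoint_apply_le {E : Type*} [NormedAddCommGroup E] [InnerProductSpace ℝ E]
    [CompleteSpace E] {ρ w : E} {M : E →L[ℝ] E} {m W : ℝ} (hM : ‖M‖ ≤ m)
    (hρ : ‖ρ‖ ≤ (1 - m) * W) (hw : ‖w‖ ≤ W) : ‖ρ + adjoint M w‖ ≤ W :=
  calc ‖ρ + adjoint M w‖ ≤ ‖ρ‖ + ‖M‖ * ‖w‖ := by
        refine (norm_add_le _ _).trans (add_le_add_right ?_ _)
        simpa only [LinearIsometryEquiv.norm_map] using (adjoint M).le_opNorm w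
    _ ≤ (1 - m) * W + m * W := by
        gcongr
        exact (norm_nonneg M).trans hM
    _ = W := by ring

theorem approximate_linear_bc_general
    (d : ℕ) (Ω : Type) [Fintype Ω]
    (ν : Ω → ℝ) (φ nxt : Ω → EuclideanSpace ℝ (Fin d)) (r : Ω → ℝ)
    (γ W ε : ℝ) (hε : 0 ≤ ε)
    (hν0 : ∀ ω, 0 ≤ ν ω)
    (ρhat ρstar : EuclideanSpace ℝ (Fin d))
    (Mhat Mstar : EuclideanSpace ℝ (Fin d) →L[ℝ] EuclideanSpace ℝ (Fin d))
    (hMle : ‖Mhat‖ ≤ ‖Mstar‖) (hMstar : ‖Mstar‖ < 1)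
    (hρle : ‖ρhat‖ ≤ ‖ρstar‖)
    (hWlarge : ‖ρstar‖ / (1 - ‖Mstar‖) ≤ W)
    (hloss : ∑ ω, ν ω *
      (‖Mhat (φ ω) - γ • nxt ω‖ ^ 2 + ((inner ℝ ρhat (φ ω) : ℝ) - r ω) ^ 2)
        ≤ ε ^ 2) :
    ∀ w₁ : EuclideanSpace ℝ (Fin d), ‖w₁‖ ≤ W →
      ∃ w₂ : EuclideanSpace ℝ (Fin d), ‖w₂‖ ≤ W ∧
        Real.sqrt (∑ ω, ν ω *
          ((inner ℝ w₂ (φ ω) : ℝ)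
            - (r ω + γ * (inner ℝ w₁ (nxt ω) : ℝ))) ^ 2) ≤ ε * (1 + W) := by
  intro w₁ hw₁
  have hW : 0 ≤ W := (div_nonneg (norm_nonneg _) (by linarith)).trans hWlarge
  have hρ : ‖ρhat‖ ≤ (1 - ‖Mstar‖) * W :=
    hρle.trans ((div_le_iff₀' (sub_pos.mpr hMstar)).mp hWlarge)
  refine ⟨ρhat + ContinuousLinearMap.adjoint Mhat w₁, norm_add_adjoint_apply_le hMle hρ hw₁, ?_⟩
  have residual_eq (ω : Ω) :
      inner ℝ (ρhat + ContinuousLinearMap.adjoint Mhat w₁) (φ ω) - (r ω + γ * inner ℝ w₁ (nxt ω))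
        = (inner ℝ ρhat (φ ω) - r ω) + inner ℝ w₁ (Mhat (φ ω) - γ • nxt ω) := by
    rw [inner_add_left, ContinuousLinearMap.adjoint_inner_left, inner_sub_right, inner_smul_right]
    ring
  have reward_err : √(∑ ω, ν ω * (inner ℝ ρhat (φ ω) - r ω) ^ 2) ≤ ε :=
    Real.sqrt_le_iff.mpr ⟨hε, sum_mul_le_of_sum_mul_add_le hν0
      (b := fun ω => ‖Mhat (φ ω) - γ • nxt ω‖ ^ 2) (fun _ => sq_nonneg _)
      (by simpa only [add_comm] using hloss)⟩
  have transition_err : √(∑ ω, ν ω * ‖Mhat (φ ω) - γ • nxt ω‖ ^ 2) ≤ ε :=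
    Real.sqrt_le_iff.mpr ⟨hε, sum_mul_le_of_sum_mul_add_le hν0 (fun _ => sq_nonneg _) hloss⟩
  calc _ = √(∑ ω, ν ω *
          ((inner ℝ ρhat (φ ω) - r ω) + inner ℝ w₁ (Mhat (φ ω) - γ • nxt ω)) ^ 2) := by
        simp only [residual_eq]
    _ ≤ √(∑ ω, ν ω * (inner ℝ ρhat (φ ω) - r ω) ^ 2)
          + ‖w₁‖ * √(∑ ω, ν ω * ‖Mhat (φ ω) - γ • nxt ω‖ ^ 2) :=
        (sqrt_sum_mul_add_sq_le hν0 _ _).trans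
          (add_le_add_right (sqrt_sum_mul_inner_sq_le hν0 _ _) _)
    _ ≤ ε + W * ε := by gcongr
    _ = ε * (1 + W) := by ring

theorem approximate_linear_bc
    (d : ℕ) (Ω : Type) [Fintype Ω]
    (ν : Ω → ℝ) (φ nxt : Ω → EuclideanSpace ℝ (Fin d)) (r : Ω → ℝ)
    (γ W ε : ℝ) (hγ0 : 0 ≤ γ) (hγ1 : γ < 1) (hε : 0 ≤ ε)
    (hν0 : ∀ ω, 0 ≤ ν ω) (hν1 : ∑ ω, ν ω = 1)
    (hφ : ∀ ω, ‖φ ω‖ ≤ 1) (hr : ∀ ω, |r ω| ≤ 1)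
    (ρhat ρstar : EuclideanSpace ℝ (Fin d))
    (Mhat Mstar : EuclideanSpace ℝ (Fin d) →L[ℝ] EuclideanSpace ℝ (Fin d))
    (hMle : ‖Mhat‖ ≤ ‖Mstar‖) (hMstar : ‖Mstar‖ < 1)
    (hρle : ‖ρhat‖ ≤ ‖ρstar‖) (hρhatW : ‖ρhat‖ ≤ W)
    (hWlarge : ‖ρstar‖ / (1 - ‖Mstar‖) ≤ W)
    (hloss : ∑ ω, ν ω *
      (‖Mhat (φ ω) - γ • nxt ω‖ ^ 2 + ((inner ℝ ρhat (φ ω) : ℝ) - r ω) ^ 2)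
        ≤ ε ^ 2) :
    ∀ w₁ : EuclideanSpace ℝ (Fin d), ‖w₁‖ ≤ W →
      ∃ w₂ : EuclideanSpace ℝ (Fin d), ‖w₂‖ ≤ W ∧
        Real.sqrt (∑ ω, ν ω *
          ((inner ℝ w₂ (φ ω) : ℝ)
            - (r ω + γ * (inner ℝ w₁ (nxt ω) : ℝ))) ^ 2) ≤ ε * (1 + W) :=
  approximate_linear_bc_general d Ω ν φ nxt r γ W ε hε hν0 ρhat ρstar Mhat Mstar hMle hMstar hρle
    hWlarge hloss
end
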